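/- Let L > 0, ν ≥ 0, and let m : [0,∞) × [0,L] → ℝ³ be twice continuously differentiable in (t,x) and satisfy the uncontrolled Landau–Lifshitz equation ∂m/∂t = m × m_xx − ν m × (m × m_xx) on [0,∞) × [0,L] together with the Neumann boundary conditions m_x(t,0) = m_x(t,L) = 0 for all t ≥ 0. Then for every t ≥ 0, the Lyapunov function V(t) = (1/2)∫₀ᴸ ‖m_x(t,x)‖₂² dx satisfies dV/dt = −ν ∫₀ᴸ ‖m(t,x) × m_xx(t,x)‖₂² dx ≤ 0. (The key computation in the paper's Theorem 2.3 on asymptotic stability of the equilibrium set.) -/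

import Mathlib

/-- Cross product on `ℝ³ = EuclideanSpace ℝ (Fin 3)`. -/
noncomputable def cross3 (u v : EuclideanSpace ℝ (Fin 3)) : EuclideanSpace ℝ (Fin 3) :=
  (WithLp.equiv 2 (Fin 3 → ℝ)).symm
    ![u 1 * v 2 - u 2 * v 1, u 2 * v 0 - u 0 * v 2, u 0 * v 1 - u 1 * v 0]

/-- Second spatial derivative `m_xx` of `m(t, x)`. -/
noncomputable def mxx (m : ℝ → ℝ → EuclideanSpace ℝ (Fin 3)) (t x : ℝ) :
    EuclideanSpace ℝ (Fin 3) :=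
  deriv (deriv (m t)) x

/-!
Differentiating under the integral sign and exchanging the mixed partial derivatives gives
`V'(t) = ∫ ⟪m_x, ∂ₓ m_t⟫`. Integrating by parts, the Neumann conditions kill the boundary terms,
so `V'(t) = -∫ ⟪m_xx, m_t⟫`. Substituting the equation for `m_t`, the precession term is
orthogonal to `m_xx`, while `⟪m_xx, m × (m × m_xx)⟫ = -‖m × m_xx‖²`.
-/

open Function MeasureTheory Set
open scoped RealInnerProductSpace

section Slices

variable {F : Type*} [NormedAddCommGroup F] [NormedSpace ℝ F]

theorem DifferentiableAt.hasDerivAt_slice_fst {G : ℝ × ℝ → F} {t x : ℝ}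
    (hG : DifferentiableAt ℝ G (t, x)) :
    HasDerivAt (fun s => G (s, x)) (fderiv ℝ G (t, x) (1, 0)) t :=
  hG.hasFDerivAt.comp_hasDerivAt t ((hasDerivAt_id t).prodMk (hasDerivAt_const t x))

theorem DifferentiableAt.hasDerivAt_slice_snd {G : ℝ × ℝ → F} {t x : ℝ}
    (hG : DifferentiableAt ℝ G (t, x)) :
    HasDerivAt (fun y => G (t, y)) (fderiv ℝ G (t, x) (0, 1)) x :=
  hG.hasFDerivAt.comp_hasDerivAt x ((hasDerivAt_const x t).prodMk (hasDerivAt_id x))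

variable {f : ℝ → ℝ → F}

theorem ContDiff.uncurry_deriv_fst {n : WithTop ℕ∞} (hf : ContDiff ℝ (n + 1) (uncurry f)) :
    ContDiff ℝ n (uncurry fun s x => deriv (fun s' => f s' x) s) := by
  have hdiff : Differentiable ℝ (uncurry f) := hf.differentiable (by simp)
  have : (uncurry fun s x => deriv (fun s' => f s' x) s) = fun p => fderiv ℝ (uncurry f) p (1, 0) :=
    funext fun p => (hdiff p).hasDerivAt_slice_fst.deriv
  rw [this]
  exact (hf.fderiv_right le_rfl).clm_apply contDiff_const

theorem ContDiff.uncurry_deriv_snd {n : WithTop ℕ∞} (hf : ContDiff ℝ (n + 1) (uncurry f)) :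
    ContDiff ℝ n (uncurry fun s => deriv (f s)) := by
  have hdiff : Differentiable ℝ (uncurry f) := hf.differentiable (by simp)
  have : (uncurry fun s => deriv (f s)) = fun p => fderiv ℝ (uncurry f) p (0, 1) :=
    funext fun p => (hdiff p).hasDerivAt_slice_snd.deriv
  rw [this]
  exact (hf.fderiv_right le_rfl).clm_apply contDiff_const

theorem ContDiff.differentiable_slice {n : WithTop ℕ∞} (hf : ContDiff ℝ n (uncurry f)) (hn : n ≠ 0)
    (t : ℝ) : Differentiable ℝ (f t) :=
  (hf.differentiable hn).comp (differentiable_const t |>.prodMk differentiable_id)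

theorem deriv_deriv_comm_of_contDiff (hf : ContDiff ℝ 2 (uncurry f)) (t x : ℝ) :
    deriv (fun s => deriv (f s) x) t = deriv (fun y => deriv (fun s => f s y) t) x := by
  have hdiff := hf.differentiable two_ne_zero
  have hdf : HasFDerivAt (fderiv ℝ (uncurry f)) (fderiv ℝ (fderiv ℝ (uncurry f)) (t, x)) (t, x) :=
    ((hf.fderiv_right (m := 1) le_rfl).differentiable one_ne_zero _).hasFDerivAt
  have hfst : (fun s => deriv (f s) x) = fun s => fderiv ℝ (uncurry f) (s, x) (0, 1) :=
    funext fun s => (hdiff _).hasDerivAt_slice_snd.deriv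
  have hsnd : (fun y => deriv (fun s => f s y) t) = fun y => fderiv ℝ (uncurry f) (t, y) (1, 0) :=
    funext fun y => (hdiff _).hasDerivAt_slice_fst.deriv
  have hslice (v : ℝ × ℝ) := hdf.clm_apply (hasFDerivAt_const v (t, x))
  rw [hfst, hsnd, (hslice _).differentiableAt.hasDerivAt_slice_fst.deriv,
    (hslice _).differentiableAt.hasDerivAt_slice_snd.deriv, (hslice _).fderiv, (hslice _).fderiv]
  simpa using ((hf.contDiffAt).isSymmSndFDerivAt (by simp)).eq (1, 0) (0, 1)

theorem hasDerivAt_intervalIntegral_of_contDiff [CompleteSpace F] (hf : ContDiff ℝ 1 (uncurry f))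
    (a b t : ℝ) :
    HasDerivAt (fun s => ∫ x in a..b, f s x) (∫ x in a..b, deriv (fun s => f s x) t) t := by
  have hf' : Continuous (uncurry fun s x => deriv (fun s' => f s' x) s) :=
    (ContDiff.uncurry_deriv_fst (n := 0) hf).continuous
  obtain ⟨C, hC⟩ := ((isCompact_Icc (a := t - 1) (b := t + 1)).prod
    isCompact_uIcc).exists_bound_of_continuousOn hf'.continuousOn
  have hcurve (s : ℝ) : Continuous fun x : ℝ => (s, x) := continuous_const.prodMk continuous_id
  refine (intervalIntegral.hasDerivAt_integral_of_dominated_loc_of_deriv_le (μ := volume)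
    (F := f) (F' := fun s x => deriv (fun s' => f s' x) s) (bound := fun _ => C)
    (Metric.ball_mem_nhds t one_pos) ?_ ?_ ?_ ?_ intervalIntegrable_const ?_).2
  · exact .of_forall fun s => (hf.continuous.comp (hcurve s)).aestronglyMeasurable
  · exact (hf.continuous.comp (hcurve t)).intervalIntegrable a b
  · exact (hf'.comp (hcurve t)).aestronglyMeasurable
  · refine .of_forall fun x hx s hs => hC (s, x) ⟨?_, uIoc_subset_uIcc hx⟩
    rw [Real.ball_eq_Ioo] at hs
    exact Ioo_subset_Icc_self hs
  · exact .of_forall fun x _ s _ =>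
      ((hf.differentiable one_ne_zero) (s, x)).hasDerivAt_slice_fst.differentiableAt.hasDerivAt

end Slices

theorem integral_inner_deriv_eq_neg_of_eq_zero {E : Type*} [NormedAddCommGroup E]
    [InnerProductSpace ℝ E] {u u' v v' : ℝ → E} {a b : ℝ}
    (hu : ∀ x ∈ uIcc a b, HasDerivAt u (u' x) x) (hv : ∀ x ∈ uIcc a b, HasDerivAt v (v' x) x)
    (hu' : ContinuousOn u' (uIcc a b)) (hv' : ContinuousOn v' (uIcc a b))
    (ha : u a = 0) (hb : u b = 0) :
    ∫ x in a..b, ⟪u x, v' x⟫ = -∫ x in a..b, ⟪u' x, v x⟫ := by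
  have hu_cont : ContinuousOn u (uIcc a b) := fun x hx => (hu x hx).continuousAt.continuousWithinAt
  have hv_cont : ContinuousOn v (uIcc a b) := fun x hx => (hv x hx).continuousAt.continuousWithinAt
  have hint₁ : IntervalIntegrable (fun x => ⟪u x, v' x⟫) volume a b :=
    (hu_cont.inner hv').intervalIntegrable
  have hint₂ : IntervalIntegrable (fun x => ⟪u' x, v x⟫) volume a b :=
    (hu'.inner hv_cont).intervalIntegrable
  have hprod := intervalIntegral.integral_eq_sub_of_hasDerivAt
    (fun x hx => (hu x hx).inner ℝ (hv x hx)) (hint₁.add hint₂)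
  rw [intervalIntegral.integral_add hint₁ hint₂, ha, hb, inner_zero_left, inner_zero_left,
    sub_zero] at hprod
  linarith

theorem hasDerivAt_half_integral_norm_sq_deriv {E : Type*} [NormedAddCommGroup E]
    [InnerProductSpace ℝ E] {m : ℝ → ℝ → E} (hm : ContDiff ℝ 2 (uncurry m)) {a b t : ℝ}
    (ha : deriv (m t) a = 0) (hb : deriv (m t) b = 0) :
    HasDerivAt (fun s => 1 / 2 * ∫ x in a..b, ‖deriv (m s) x‖ ^ 2)
      (-∫ x in a..b, ⟪deriv (deriv (m t)) x, deriv (fun s => m s x) t⟫) t := by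
  have hmx : ContDiff ℝ 1 (uncurry fun s => deriv (m s)) := hm.uncurry_deriv_snd
  have hmt : ContDiff ℝ 1 (uncurry fun s x => deriv (fun s' => m s' x) s) := hm.uncurry_deriv_fst
  have hmxx : Continuous (deriv (deriv (m t))) :=
    (ContDiff.uncurry_deriv_snd (n := 0) hmx).continuous.uncurry_left t
  have hmtx : Continuous (deriv fun y => deriv (fun s => m s y) t) :=
    (ContDiff.uncurry_deriv_snd (n := 0) hmt).continuous.uncurry_left t
  have hdt (x : ℝ) : deriv (fun s => ‖deriv (m s) x‖ ^ 2) t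
      = 2 * ⟪deriv (m t) x, deriv (fun y => deriv (fun s => m s y) t) x⟫ := by
    rw [← deriv_deriv_comm_of_contDiff hm]
    exact ((hmx.differentiable one_ne_zero (t, x)).hasDerivAt_slice_fst.differentiableAt
      |>.hasDerivAt.norm_sq).deriv
  have hibp := integral_inner_deriv_eq_neg_of_eq_zero (a := a) (b := b)
    (fun x _ => (hmx.differentiable_slice one_ne_zero t x).hasDerivAt)
    (fun x _ => (hmt.differentiable_slice one_ne_zero t x).hasDerivAt)
    hmxx.continuousOn hmtx.continuousOn ha hb
  have hvalue : 1 / 2 * ∫ x in a..b, deriv (fun s => ‖deriv (m s) x‖ ^ 2) t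
      = -∫ x in a..b, ⟪deriv (deriv (m t)) x, deriv (fun s => m s x) t⟫ := by
    rw [intervalIntegral.integral_congr fun x _ => hdt x, intervalIntegral.integral_const_mul, hibp]
    ring
  rw [← hvalue]
  exact (hasDerivAt_intervalIntegral_of_contDiff (f := fun s x => ‖deriv (m s) x‖ ^ 2)
    (contDiff_norm_sq ℝ |>.comp hmx) a b t).const_mul _

theorem inner_cross3_sub_smul_cross3_cross3 (u w : EuclideanSpace ℝ (Fin 3)) (ν : ℝ) :
    ⟪w, cross3 u w - ν • cross3 u (cross3 u w)⟫ = ν * ‖cross3 u w‖ ^ 2 := by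
  rw [EuclideanSpace.norm_sq_eq]
  simp only [cross3, Fin.isValue, WithLp.equiv_symm_apply, Matrix.cons_val, Matrix.cons_val_one,
    Matrix.cons_val_zero, inner_sub_right, PiLp.inner_apply, RCLike.inner_apply, Real.ringHom_apply,
    Fin.sum_univ_three, inner_smul_right, Real.norm_eq_abs, sq_abs]
  ring

theorem landau_lifshitz_lyapunov_decay
    (L ν : ℝ) (hL : 0 < L) (hν : 0 ≤ ν)
    (m : ℝ → ℝ → EuclideanSpace ℝ (Fin 3))
    (hsmooth : ContDiff ℝ 2 (fun p : ℝ × ℝ => m p.1 p.2))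
    (hpde : ∀ t x : ℝ, 0 ≤ t → x ∈ Set.Icc (0 : ℝ) L →
      deriv (fun s => m s x) t
        = cross3 (m t x) (mxx m t x)
          - ν • cross3 (m t x) (cross3 (m t x) (mxx m t x)))
    (hbc : ∀ t : ℝ, 0 ≤ t → deriv (m t) 0 = 0 ∧ deriv (m t) L = 0) :
    ∀ t : ℝ, 0 ≤ t →
      HasDerivWithinAt (fun s => (1 / 2) * ∫ x in (0 : ℝ)..L, ‖deriv (m s) x‖ ^ 2)
        (-ν * ∫ x in (0 : ℝ)..L, ‖cross3 (m t x) (mxx m t x)‖ ^ 2) (Set.Ici (0 : ℝ)) t ∧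
      -ν * ∫ x in (0 : ℝ)..L, ‖cross3 (m t x) (mxx m t x)‖ ^ 2 ≤ 0 := by
  intro t ht
  have hdissipation : ∫ x in (0 : ℝ)..L, ⟪deriv (deriv (m t)) x, deriv (fun s => m s x) t⟫
      = ν * ∫ x in (0 : ℝ)..L, ‖cross3 (m t x) (mxx m t x)‖ ^ 2 := by
    rw [← intervalIntegral.integral_const_mul]
    refine intervalIntegral.integral_congr fun x hx => ?_
    rw [uIcc_of_le hL.le] at hx
    rw [hpde t x ht hx]
    exact inner_cross3_sub_smul_cross3_cross3 _ _ _
  refine ⟨?_, ?_⟩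
  · rw [neg_mul, ← hdissipation]
    exact (hasDerivAt_half_integral_norm_sq_deriv hsmooth (hbc t ht).1
      (hbc t ht).2).hasDerivWithinAt
  · have hnonneg : 0 ≤ ∫ x in (0 : ℝ)..L, ‖cross3 (m t x) (mxx m t x)‖ ^ 2 :=
      intervalIntegral.integral_nonneg hL.le fun x _ => sq_nonneg _
    rw [neg_mul, neg_nonpos]
    exact mul_nonneg hν hnonneg
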